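/- arXiv:2505.01357 — 2 statements merged into one kernel-verified Lean document; each statement's English description precedes it below -/
import Mathlib

section
/- Let A, Ã ∈ ℝ^{p×r} each have orthonormal columns, let U ∈ ℝ^{r×r} be orthogonal, and define D(Ã,A)² := 1 − (1/r)·tr(AAᵀÃÃᵀ). Then D(Ã,A)² ≤ 2‖Ã − AU‖², where ‖·‖ is the spectral norm. -/
open Matrix
open scoped Matrix.Norms.L2Operator

/-!
With `P = 1 - A Aᵀ` the orthogonal projection onto `C(A)ᗮ`, the hypothesis `ÃᵀÃ = 1` gives
`r · D(Ã,A)² = tr (Ãᵀ P Ã)`. Since `P A = 0`, the matrix `Ã` may be replaced by `E = Ã - A U` in it,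
and `tr (Eᵀ P E) ≤ tr (Eᵀ E) ≤ r ‖E‖²` because each column of `E` has Euclidean
norm at most `‖E‖`. Hence `D(Ã,A)² ≤ ‖Ã - A U‖²`.
-/

namespace Matrix

variable {m n k : Type*} [Fintype m] [Fintype k]

lemma trace_transpose_mul_self_eq_sum_sq [Fintype n] (B : Matrix m n ℝ) :
    (Bᵀ * B).trace = ∑ j, ∑ i, B i j ^ 2 := by
  simp [trace, mul_apply, sq]

lemma trace_transpose_mul_self_nonneg [Fintype n] (B : Matrix m n ℝ) : 0 ≤ (Bᵀ * B).trace := by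
  rw [trace_transpose_mul_self_eq_sum_sq]
  positivity

lemma sum_sq_col_le_l2_opNorm_sq [Fintype n] [DecidableEq n] (B : Matrix m n ℝ) (j : n) :
    ∑ i, B i j ^ 2 ≤ ‖B‖ ^ 2 := by
  have hcol := B.l2_opNorm_mulVec (EuclideanSpace.single j 1)
  rw [PiLp.norm_single, norm_one, mul_one] at hcol
  calc ∑ i, B i j ^ 2
      = ‖(EuclideanSpace.equiv m ℝ).symm (B *ᵥ EuclideanSpace.single j 1)‖ ^ 2 := by
        rw [EuclideanSpace.norm_eq, Real.sq_sqrt (by positivity)]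
        simp
    _ ≤ ‖B‖ ^ 2 := pow_le_pow_left₀ (norm_nonneg _) hcol 2

lemma trace_transpose_mul_self_le_card_mul_l2_opNorm_sq [Fintype n] [DecidableEq n]
    (B : Matrix m n ℝ) :
    (Bᵀ * B).trace ≤ Fintype.card n * ‖B‖ ^ 2 := by
  rw [trace_transpose_mul_self_eq_sum_sq]
  simpa using Finset.sum_le_sum fun j (_ : j ∈ Finset.univ) => sum_sq_col_le_l2_opNorm_sq B j

variable [DecidableEq m]

lemma trace_transpose_mul_one_sub_mul_transpose_mul [Fintype n] (A : Matrix m k ℝ)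
    (B : Matrix m n ℝ) :
    (Bᵀ * (1 - A * Aᵀ) * B).trace = (Bᵀ * B).trace - ((Aᵀ * B)ᵀ * (Aᵀ * B)).trace := by
  simp only [Matrix.mul_sub, Matrix.sub_mul, Matrix.mul_one, transpose_mul, Matrix.mul_assoc,
    transpose_transpose, trace_sub]

lemma transpose_add_mul_mul_one_sub_mul_transpose_mul_add_mul [DecidableEq k] {A : Matrix m k ℝ}
    (hA : Aᵀ * A = 1) (B : Matrix m n ℝ) (C : Matrix k n ℝ) :
    (B + A * C)ᵀ * (1 - A * Aᵀ) * (B + A * C) = Bᵀ * (1 - A * Aᵀ) * B := by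
  have hPA : (1 - A * Aᵀ) * A = 0 := by
    rw [Matrix.sub_mul, Matrix.one_mul, Matrix.mul_assoc, hA, Matrix.mul_one, sub_self]
  have hright : (1 - A * Aᵀ) * (B + A * C) = (1 - A * Aᵀ) * B := by
    rw [Matrix.mul_add, ← Matrix.mul_assoc, hPA, Matrix.zero_mul, add_zero]
  have hleft : (B + A * C)ᵀ * (1 - A * Aᵀ) = Bᵀ * (1 - A * Aᵀ) := by
    have hsymm : (1 - A * Aᵀ)ᵀ = 1 - A * Aᵀ := by simp
    simpa only [transpose_mul, hsymm] using congrArg transpose hright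
  rw [Matrix.mul_assoc, hright, ← Matrix.mul_assoc, hleft]

end Matrix

theorem stmt5_general (p r : ℕ) (hr : 0 < r)
    (A At : Matrix (Fin p) (Fin r) ℝ) (U : Matrix (Fin r) (Fin r) ℝ)
    (hA : Aᵀ * A = 1) (hAt : Atᵀ * At = 1) :
    1 - (1 / (r : ℝ)) * (A * Aᵀ * (At * Atᵀ)).trace ≤ 2 * ‖At - A * U‖ ^ 2 := by
  set E := At - A * U
  have hproj : (r : ℝ) - (A * Aᵀ * (At * Atᵀ)).trace = (Atᵀ * (1 - A * Aᵀ) * At).trace := by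
    rw [trace_transpose_mul_one_sub_mul_transpose_mul, hAt, trace_one, Fintype.card_fin,
      transpose_mul, transpose_transpose, trace_mul_comm (A * Aᵀ), Matrix.mul_assoc,
      trace_mul_comm At]
    simp only [Matrix.mul_assoc]
  have hshift : Atᵀ * (1 - A * Aᵀ) * At = Eᵀ * (1 - A * Aᵀ) * E := by
    simpa [E] using transpose_add_mul_mul_one_sub_mul_transpose_mul_add_mul hA E U
  have hbound : (r : ℝ) - (A * Aᵀ * (At * Atᵀ)).trace ≤ r * ‖E‖ ^ 2 := by
    rw [hproj, hshift, trace_transpose_mul_one_sub_mul_transpose_mul]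
    have := trace_transpose_mul_self_le_card_mul_l2_opNorm_sq E
    rw [Fintype.card_fin] at this
    linarith [trace_transpose_mul_self_nonneg (Aᵀ * E)]
  have hr' : (0 : ℝ) < r := by exact_mod_cast hr
  have hD : 1 - (1 / (r : ℝ)) * (A * Aᵀ * (At * Atᵀ)).trace ≤ ‖E‖ ^ 2 := by
    have hrescale : 1 - (1 / (r : ℝ)) * (A * Aᵀ * (At * Atᵀ)).trace
        = ((r : ℝ) - (A * Aᵀ * (At * Atᵀ)).trace) / r := by
      field_simp
    rw [hrescale, div_le_iff₀ hr']
    linarith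
  linarith [sq_nonneg ‖E‖]

/-- For `A, Ã ∈ ℝ^{p×r}` with orthonormal columns, `U` orthogonal, with
`D(Ã,A)² := 1 − (1/r)·tr(AAᵀÃÃᵀ)`, we have `D(Ã,A)² ≤ 2‖Ã − AU‖²` in the
spectral norm. -/
theorem stmt5 (p r : ℕ) (hr : 0 < r)
    (A At : Matrix (Fin p) (Fin r) ℝ) (U : Matrix (Fin r) (Fin r) ℝ)
    (hA : Aᵀ * A = 1) (hAt : Atᵀ * At = 1) (hU : Uᵀ * U = 1) :
    1 - (1 / (r : ℝ)) * (A * Aᵀ * (At * Atᵀ)).trace ≤ 2 * ‖At - A * U‖ ^ 2 :=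
  stmt5_general p r hr A At U hA hAt
end

section
/- Let Y ∈ ℝ^{n×p} and Ỹ ∈ ℝ^{n×q} with ỸᵀỸ invertible, set Π := Ỹ(ỸᵀỸ)⁻¹Ỹᵀ and M := Yᵀ Π Y (a symmetric positive semidefinite p×p matrix). Then for r ≤ p, the constrained least squares problem min over H ∈ ℝ^{q×r} and A ∈ ℝ^{p×r} with AᵀA = I_r of ‖Y − ỸHAᵀ‖_F² has optimal value ‖Y‖_F² − Σ_{i=1}^{r} λ_i(M), where λ_1(M) ≥ … ≥ λ_p(M) are the eigenvalues of M, and the minimum is attained by taking the columns of A to be r orthonormal eigenvectors of M corresponding to its r largest eigenvalues (with H = (ỸᵀỸ)⁻¹ỸᵀYA). -/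
/-!
Write `Π = Ỹ(ỸᵀỸ)⁻¹Ỹᵀ`. For `AᵀA = 1`, the matrix `ΠYAAᵀ` is Frobenius-orthogonal to
`Y - ΠYAAᵀ` and differs from `ỸHAᵀ` by `Ỹ(W - H)Aᵀ` with `W = (ỸᵀỸ)⁻¹ỸᵀYA`, so by Pythagoras
`‖Y - ỸHAᵀ‖² = ‖Y‖² - tr(AᵀMA) + ‖Ỹ(W - H)‖²`. With `B = VᵀA` the trace is
`∑ μᵢ (BBᵀ)ᵢᵢ`, and the diagonal of the projection `BBᵀ` has entries in `[0, 1]` summing to `r`,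
so it is at most the sum of the `r` largest `μᵢ`; both bounds are attained for `H = W` and `A` the
first `r` columns of `V`.
-/

open Matrix

/-- Squared Frobenius norm of a real matrix. -/
def frobSq {m n : ℕ} (M : Matrix (Fin m) (Fin n) ℝ) : ℝ := ∑ i, ∑ j, (M i j) ^ 2

open Finset

section FrobeniusInner

variable {l m n : Type*} [Fintype l] [Fintype m] [Fintype n]

def frobInner (X Z : Matrix m n ℝ) : ℝ := trace (Xᵀ * Z)

lemma frobInner_comm (X Z : Matrix m n ℝ) : frobInner X Z = frobInner Z X := by
  rw [frobInner, ← trace_transpose, transpose_mul, transpose_transpose, frobInner]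

lemma frobInner_sub_left (X X' Z : Matrix m n ℝ) :
    frobInner (X - X') Z = frobInner X Z - frobInner X' Z := by
  simp only [frobInner, transpose_sub, Matrix.sub_mul, trace_sub]

lemma frobInner_sub_right (X Z Z' : Matrix m n ℝ) :
    frobInner X (Z - Z') = frobInner X Z - frobInner X Z' := by
  simp only [frobInner, Matrix.mul_sub, trace_sub]

lemma frobInner_mul_left (X : Matrix m n ℝ) (B : Matrix m l ℝ) (Z : Matrix l n ℝ) :
    frobInner X (B * Z) = frobInner (Bᵀ * X) Z := by
  rw [frobInner, frobInner, transpose_mul, transpose_transpose, Matrix.mul_assoc]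

lemma frobInner_mul_right (X : Matrix m n ℝ) (Z : Matrix m l ℝ) (B : Matrix l n ℝ) :
    frobInner X (Z * B) = frobInner (X * Bᵀ) Z := by
  rw [frobInner, frobInner, transpose_mul, transpose_transpose, ← Matrix.mul_assoc,
    trace_mul_comm, Matrix.mul_assoc]

end FrobeniusInner

section FrobSq

variable {a b c : ℕ}

lemma frobSq_eq_frobInner (X : Matrix (Fin a) (Fin b) ℝ) : frobSq X = frobInner X X := by
  simp only [frobSq, frobInner, Matrix.trace, Matrix.diag, mul_apply, transpose_apply, sq]
  exact sum_comm

lemma frobSq_nonneg (X : Matrix (Fin a) (Fin b) ℝ) : 0 ≤ frobSq X :=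
  sum_nonneg fun _ _ => sum_nonneg fun _ _ => sq_nonneg _

lemma frobSq_zero : frobSq (0 : Matrix (Fin a) (Fin b) ℝ) = 0 := by
  simp [frobSq]

lemma frobSq_sub (X Z : Matrix (Fin a) (Fin b) ℝ) :
    frobSq (X - Z) = frobSq X - 2 * frobInner X Z + frobSq Z := by
  simp only [frobSq_eq_frobInner, frobInner_sub_left, frobInner_sub_right, frobInner_comm Z X]
  ring

lemma frobSq_sub_eq_of_frobInner_eq_zero {Z Z₀ X : Matrix (Fin a) (Fin b) ℝ}
    (h : frobInner (Z - Z₀) X = 0) :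
    frobSq (Z - X) = frobSq Z - frobSq Z₀ + frobSq (Z₀ - X) := by
  rw [frobInner_sub_left] at h
  rw [frobSq_sub, frobSq_sub]
  linarith

lemma frobSq_mul_transpose_of_orthonormal (X : Matrix (Fin a) (Fin c) ℝ)
    {A : Matrix (Fin b) (Fin c) ℝ} (hA : Aᵀ * A = 1) : frobSq (X * Aᵀ) = frobSq X := by
  rw [frobSq_eq_frobInner, frobInner_mul_right, transpose_transpose, Matrix.mul_assoc, hA,
    Matrix.mul_one, frobSq_eq_frobInner]

end FrobSq

section Regression

variable {n p q r : ℕ}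

lemma gram_mul_nonsing_inv_mul (Yt : Matrix (Fin n) (Fin q) ℝ) (hK : IsUnit (Ytᵀ * Yt))
    {k : ℕ} (Z : Matrix (Fin n) (Fin k) ℝ) :
    Ytᵀ * Yt * ((Ytᵀ * Yt)⁻¹ * Ytᵀ * Z) = Ytᵀ * Z := by
  simp only [← Matrix.mul_assoc]
  rw [mul_nonsing_inv _ ((isUnit_iff_isUnit_det _).mp hK), Matrix.one_mul]

lemma frobSq_sub_mul_mul_transpose (Y : Matrix (Fin n) (Fin p) ℝ)
    (Yt : Matrix (Fin n) (Fin q) ℝ) (hK : IsUnit (Ytᵀ * Yt))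
    (H : Matrix (Fin q) (Fin r) ℝ) {A : Matrix (Fin p) (Fin r) ℝ} (hA : Aᵀ * A = 1) :
    frobSq (Y - Yt * H * Aᵀ) =
      frobSq Y - trace (Aᵀ * (Yᵀ * (Yt * (Ytᵀ * Yt)⁻¹ * Ytᵀ) * Y) * A) +
        frobSq (Yt * ((Ytᵀ * Yt)⁻¹ * Ytᵀ * Y * A) - Yt * H) := by
  set W := (Ytᵀ * Yt)⁻¹ * Ytᵀ * Y * A
  have hW : Ytᵀ * Yt * W = Ytᵀ * (Y * A) := by
    rw [← gram_mul_nonsing_inv_mul Yt hK (Y * A)]; simp only [W, Matrix.mul_assoc]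
  have hnormal : Ytᵀ * ((Y - Yt * W * Aᵀ) * A) = 0 := by
    rw [Matrix.sub_mul, Matrix.mul_assoc (Yt * W), hA, Matrix.mul_one, Matrix.mul_sub,
      ← Matrix.mul_assoc Ytᵀ Yt W, hW, sub_self]
  have horth : frobInner (Y - Yt * W * Aᵀ) (Yt * H * Aᵀ) = 0 := by
    rw [frobInner_mul_right, transpose_transpose, frobInner_mul_left, hnormal]
    simp [frobInner]
  have hproj : frobSq (Yt * W) = trace (Aᵀ * (Yᵀ * (Yt * (Ytᵀ * Yt)⁻¹ * Ytᵀ) * Y) * A) := by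
    rw [frobSq_eq_frobInner, frobInner_mul_left, ← Matrix.mul_assoc, hW,
      ← frobInner_mul_left, frobInner]
    simp only [W, transpose_mul, Matrix.mul_assoc]
  rw [frobSq_sub_eq_of_frobInner_eq_zero horth, ← Matrix.sub_mul,
    frobSq_mul_transpose_of_orthonormal _ hA, frobSq_mul_transpose_of_orthonormal _ hA, hproj]

end Regression

lemma diag_le_one_of_mul_self_eq {m : Type*} [Fintype m] {P : Matrix m m ℝ} (hP : P * P = P)
    (hPt : Pᵀ = P) (i : m) : P i i ≤ 1 := by
  have hsq : P i i = ∑ j, P i j ^ 2 := by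
    conv_lhs => rw [← hP]
    refine sum_congr rfl fun j _ => ?_
    have hsymm : P j i = P i j := congrFun (congrFun hPt i) j
    show P i j * P j i = P i j ^ 2
    rw [hsymm, sq]
  have hle : P i i ^ 2 ≤ P i i :=
    hsq ▸ single_le_sum (f := fun j => P i j ^ 2) (fun j _ => sq_nonneg _) (mem_univ i)
  nlinarith

lemma sum_mul_le_sum_of_threshold {ι : Type*} [Fintype ι] [DecidableEq ι] (T : Finset ι)
    {μ s : ι → ℝ} {c : ℝ} (hT : ∀ i ∈ T, c ≤ μ i) (hTc : ∀ i ∉ T, μ i ≤ c)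
    (hs0 : ∀ i, 0 ≤ s i) (hs1 : ∀ i, s i ≤ 1) (hs : ∑ i, s i = #T) :
    ∑ i, μ i * s i ≤ ∑ i ∈ T, μ i := by
  have key : ∀ i, μ i * s i ≤ c * s i + (if i ∈ T then μ i - c else 0) := by
    intro i
    by_cases hi : i ∈ T
    · simp only [if_pos hi]; nlinarith [hT i hi, hs1 i]
    · simp only [if_neg hi]; nlinarith [hTc i hi, hs0 i]
  calc ∑ i, μ i * s i ≤ ∑ i, (c * s i + (if i ∈ T then μ i - c else 0)) :=
        sum_le_sum fun i _ => key i
    _ = ∑ i ∈ T, μ i := by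
        rw [sum_add_distrib, ← mul_sum, hs, sum_ite_mem, univ_inter, sum_sub_distrib,
          sum_const, nsmul_eq_mul]
        ring

lemma sum_mul_le_sum_castLE {p r : ℕ} (hr : r ≤ p) {μ s : Fin p → ℝ} (hμ : Antitone μ)
    (hs0 : ∀ i, 0 ≤ s i) (hs1 : ∀ i, s i ≤ 1) (hs : ∑ i, s i = r) :
    ∑ i, μ i * s i ≤ ∑ j : Fin r, μ (Fin.castLE hr j) := by
  set T := univ.map (Fin.castLEEmb hr)
  have hmem : ∀ i : Fin p, i ∈ T ↔ (i : ℕ) < r := fun i => by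
    simp only [T, mem_map, mem_univ, true_and, Fin.castLEEmb_apply]
    exact ⟨fun ⟨j, hj⟩ => hj ▸ j.isLt, fun h => ⟨⟨i, h⟩, rfl⟩⟩
  obtain ⟨c, hT, hTc⟩ : ∃ c, (∀ i ∈ T, c ≤ μ i) ∧ (∀ i ∉ T, μ i ≤ c) := by
    rcases Nat.eq_zero_or_pos p with rfl | hp
    · exact ⟨0, fun i => i.elim0, fun i => i.elim0⟩
    · refine ⟨μ ⟨r - 1, by omega⟩, fun i hi => hμ ?_, fun i hi => hμ ?_⟩ <;>
        simp only [hmem, not_lt] at hi <;> rw [Fin.le_def] <;> dsimp only <;> omega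
  have hcard : #T = r := by simp [T]
  calc ∑ i, μ i * s i ≤ ∑ i ∈ T, μ i :=
        sum_mul_le_sum_of_threshold T hT hTc hs0 hs1 (by rw [hs, hcard])
    _ = ∑ j : Fin r, μ (Fin.castLE hr j) := sum_map _ _ _

/-- Ky Fan's maximum principle for a diagonal matrix. -/
lemma trace_transpose_mul_diagonal_mul_le {p r : ℕ} (hr : r ≤ p) {μ : Fin p → ℝ}
    (hμ : Antitone μ) {B : Matrix (Fin p) (Fin r) ℝ} (hB : Bᵀ * B = 1) :
    trace (Bᵀ * diagonal μ * B) ≤ ∑ j : Fin r, μ (Fin.castLE hr j) := by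
  set P := B * Bᵀ
  have htrace : trace (Bᵀ * diagonal μ * B) = ∑ i, μ i * P i i := by
    rw [trace_mul_cycle, trace_mul_comm]
    simp only [Matrix.trace, Matrix.diag, diagonal_mul, P]
  have hP0 : ∀ i, 0 ≤ P i i := fun i => by
    simpa [P, mul_apply, ← sq] using sum_nonneg fun j _ => sq_nonneg (B i j)
  have hP1 : ∀ i, P i i ≤ 1 := diag_le_one_of_mul_self_eq
    (by rw [Matrix.mul_assoc, ← Matrix.mul_assoc Bᵀ, hB, Matrix.one_mul])
    (by rw [transpose_mul, transpose_transpose])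
  have hPsum : ∑ i, P i i = r := by
    change trace (B * Bᵀ) = r
    rw [trace_mul_comm, hB, trace_one, Fintype.card_fin]
  rw [htrace]
  exact sum_mul_le_sum_castLE hr hμ hP0 hP1 hPsum

lemma trace_conj_diagonal_le {p r : ℕ} (hr : r ≤ p) {μ : Fin p → ℝ} (hμ : Antitone μ)
    {V : Matrix (Fin p) (Fin p) ℝ} (hV : Vᵀ * V = 1) {A : Matrix (Fin p) (Fin r) ℝ}
    (hA : Aᵀ * A = 1) :
    trace (Aᵀ * (V * diagonal μ * Vᵀ) * A) ≤ ∑ j : Fin r, μ (Fin.castLE hr j) := by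
  have hB : (Vᵀ * A)ᵀ * (Vᵀ * A) = 1 := by
    rw [transpose_mul, transpose_transpose, Matrix.mul_assoc, ← Matrix.mul_assoc V,
      mul_eq_one_comm.mp hV, Matrix.one_mul, hA]
  have hconj : Aᵀ * (V * diagonal μ * Vᵀ) * A = (Vᵀ * A)ᵀ * diagonal μ * (Vᵀ * A) := by
    simp only [transpose_mul, transpose_transpose, Matrix.mul_assoc]
  rw [hconj]
  exact trace_transpose_mul_diagonal_mul_le hr hμ hB

section Spectral

variable {p r : ℕ} {V : Matrix (Fin p) (Fin p) ℝ}

lemma transpose_submatrix_mul_submatrix (hV : Vᵀ * V = 1) {e : Fin r → Fin p}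
    (he : Function.Injective e) : (V.submatrix id e)ᵀ * V.submatrix id e = 1 := by
  rw [transpose_submatrix, ← submatrix_mul Vᵀ V e id e Function.bijective_id, hV,
    submatrix_one _ he]

lemma mul_submatrix_eq_submatrix_mul_diagonal (hV : Vᵀ * V = 1) (μ : Fin p → ℝ)
    (e : Fin r → Fin p) :
    V * diagonal μ * Vᵀ * V.submatrix id e = V.submatrix id e * diagonal (μ ∘ e) := by
  have hVe : Vᵀ * V.submatrix id e = (1 : Matrix (Fin p) (Fin p) ℝ).submatrix id e := by
    rw [← hV]; rfl
  rw [Matrix.mul_assoc, hVe]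
  ext i j
  simp [mul_apply, diagonal, one_apply]

lemma trace_submatrix_conj_diagonal (hV : Vᵀ * V = 1) (μ : Fin p → ℝ) (hr : r ≤ p) :
    trace ((V.submatrix id (Fin.castLE hr))ᵀ * (V * diagonal μ * Vᵀ) *
      V.submatrix id (Fin.castLE hr)) = ∑ j : Fin r, μ (Fin.castLE hr j) := by
  rw [Matrix.mul_assoc, mul_submatrix_eq_submatrix_mul_diagonal hV, ← Matrix.mul_assoc,
    transpose_submatrix_mul_submatrix hV (Fin.castLE_injective hr), Matrix.one_mul,
    trace_diagonal, Function.comp_def]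

end Spectral

/-- With `Π = Ỹ(ỸᵀỸ)⁻¹Ỹᵀ` and `M = YᵀΠY = V diag(μ) Vᵀ` (V orthogonal, μ in
decreasing order), the constrained problem `min ‖Y − ỸHAᵀ‖_F²` over `H` and
`AᵀA = I_r` has optimal value `‖Y‖_F² − Σ_{i=1}^r λ_i(M)`, attained when the
columns of `A` are the top-`r` eigenvectors and `H = (ỸᵀỸ)⁻¹ỸᵀYA`. -/
theorem stmt12 (n p q r : ℕ) (hr : r ≤ p)
    (Y : Matrix (Fin n) (Fin p) ℝ) (Yt : Matrix (Fin n) (Fin q) ℝ)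
    (hinv : IsUnit (Ytᵀ * Yt))
    (V : Matrix (Fin p) (Fin p) ℝ) (μ : Fin p → ℝ)
    (hV : Vᵀ * V = 1) (hμ : Antitone μ)
    (hM : Yᵀ * (Yt * (Ytᵀ * Yt)⁻¹ * Ytᵀ) * Y = V * Matrix.diagonal μ * Vᵀ) :
    (∀ (H : Matrix (Fin q) (Fin r) ℝ) (A : Matrix (Fin p) (Fin r) ℝ), Aᵀ * A = 1 →
      frobSq Y - ∑ i : Fin r, μ (Fin.castLE hr i) ≤ frobSq (Y - Yt * H * Aᵀ)) ∧
    frobSq (Y - Yt * ((Ytᵀ * Yt)⁻¹ * Ytᵀ * Y * (V.submatrix id (Fin.castLE hr))) *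
        (V.submatrix id (Fin.castLE hr))ᵀ) =
      frobSq Y - ∑ i : Fin r, μ (Fin.castLE hr i) := by
  refine ⟨fun H A hA => ?_, ?_⟩
  · rw [frobSq_sub_mul_mul_transpose Y Yt hinv H hA, hM]
    linarith [trace_conj_diagonal_le hr hμ hV hA,
      frobSq_nonneg (Yt * ((Ytᵀ * Yt)⁻¹ * Ytᵀ * Y * A) - Yt * H)]
  · rw [frobSq_sub_mul_mul_transpose Y Yt hinv _
      (transpose_submatrix_mul_submatrix hV (Fin.castLE_injective hr)), hM, sub_self,
      frobSq_zero, trace_submatrix_conj_diagonal hV μ hr, add_zero]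
end
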